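/- Let Z be a multimatroid with total order ≺ on its skew classes, and let T be a transversal of Z. If a skew class ω is active with respect to T (i.e., there is a circuit C with min(C) ∈ ω and C − ω ⊆ T), then Z has a circuit C such that min(C) ∈ ω, C − ω ⊆ T, and C meets no skew class other than ω that is active with respect to T. -/
import Mathlib


open Finset

variable {U ι : Type}

section Defs
variable [DecidableEq U] [Fintype U] [DecidableEq ι] [Fintype ι]

/-- `S` is a subtransversal: it meets each skew class at most once.
Skew classes are the fibers of `cls : U → ι`. -/
def Subtransversal (cls : U → ι) (S : Finset U) : Prop :=
  Set.InjOn cls ↑S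

/-- The skew class with index `i`, as a finset. -/
def skewClass (cls : U → ι) (i : ι) : Finset U :=
  Finset.univ.filter (fun x => cls x = i)

/-- `T` is a transversal: it meets each skew class exactly once. -/
def Transversal (cls : U → ι) (T : Finset U) : Prop :=
  Subtransversal cls T ∧ ∀ i : ι, ∃ x ∈ T, cls x = i

/-- The multimatroid rank axioms for a rank function `r` on the carrier given by
`cls : U → ι` (whose fibers, assumed nonempty, are the skew classes).
The first three fields express axiom (R1) (each transversal carries a matroid),
and `axiomR2` is axiom (R2). -/
structure IsMultimatroid (cls : U → ι) (r : Finset U → ℕ) : Prop where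
  cls_surj : Function.Surjective cls
  rank_le_card : ∀ S, Subtransversal cls S → r S ≤ S.card
  mono : ∀ S T, Subtransversal cls T → S ⊆ T → r S ≤ r T
  submod : ∀ S T, Subtransversal cls (S ∪ T) → r (S ∪ T) + r (S ∩ T) ≤ r S + r T
  axiomR2 : ∀ S, ∀ x y : U, Subtransversal cls S → cls x = cls y → x ≠ y →
    (∀ u ∈ S, cls u ≠ cls x) →
    2 * r S + 1 ≤ r (insert x S) + r (insert y S)

/-- An independent set of the multimatroid. -/
def Indep (cls : U → ι) (r : Finset U → ℕ) (S : Finset U) : Prop :=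
  Subtransversal cls S ∧ r S = S.card

/-- A basis: a maximal independent subtransversal. -/
def MMBasis (cls : U → ι) (r : Finset U → ℕ) (B : Finset U) : Prop :=
  Indep cls r B ∧ ∀ S, Indep cls r S → B ⊆ S → S = B

/-- A circuit: a minimal dependent subtransversal. -/
def Circuit (cls : U → ι) (r : Finset U → ℕ) (C : Finset U) : Prop :=
  Subtransversal cls C ∧ r C < C.card ∧ ∀ D ⊂ C, ¬ r D < D.card

/-- Non-degenerate: every skew class has at least two elements. -/
def Nondegenerate (cls : U → ι) : Prop :=
  ∀ i : ι, 2 ≤ (skewClass cls i).card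

/-- An element is singular if its singleton has rank `0`. -/
def Singular (r : Finset U → ℕ) (e : U) : Prop := r {e} = 0

end Defs

section Order
variable [DecidableEq U] [Fintype U] [DecidableEq ι] [Fintype ι] [LinearOrder ι]

/-- The skew class `i` is active with respect to the transversal `T` (in
particular, with respect to a basis): there is a circuit `C` with
`C − ω_i ⊆ T` whose `≺`-least element lies in the class `i`. -/
def Active (cls : U → ι) (r : Finset U → ℕ) (T : Finset U) (i : ι) : Prop :=
  ∃ C, Circuit cls r C ∧ C \ skewClass cls i ⊆ T ∧
    ∃ m ∈ C, cls m = i ∧ ∀ x ∈ C, i ≤ cls x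

end Order

section Aux
set_option linter.unusedSectionVars false
variable [DecidableEq U] [Fintype U] [DecidableEq ι] [Fintype ι]
variable {cls : U → ι} {r : Finset U → ℕ}

lemma subtr_mono {S A : Finset U} (h : Subtransversal cls A) (hSA : S ⊆ A) :
    Subtransversal cls S :=
  Set.InjOn.mono (by exact_mod_cast hSA) h

lemma subtr_of_forall {S : Finset U}
    (h : ∀ x ∈ S, ∀ y ∈ S, cls x = cls y → x = y) : Subtransversal cls S :=
  fun x hx y hy hxy => h x hx y hy hxy

lemma mem_skewClass {z : U} {i : ι} : z ∈ skewClass cls i ↔ cls z = i := by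
  simp [skewClass]

lemma rank_insert_le (hM : IsMultimatroid cls r) {S : Finset U} (a : U)
    (h : Subtransversal cls (insert a S)) : r (insert a S) ≤ r S + 1 := by
  have h1 := hM.submod S {a} (by rwa [union_comm, ← insert_eq])
  have h2 : r {a} ≤ 1 := by
    have := hM.rank_le_card {a} (subtr_mono h (by simp))
    simpa using this
  have h3 : r (S ∩ {a}) ≥ 0 := Nat.zero_le _
  rw [union_comm, ← insert_eq] at h1
  omega

lemma rank_le_rank_add (hM : IsMultimatroid cls r) {I S : Finset U}
    (hI : Subtransversal cls I) (hSI : S ⊆ I) : r I ≤ r S + (I \ S).card := by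
  suffices key : ∀ n : ℕ, ∀ S ⊆ I, (I \ S).card = n → r I ≤ r S + n from
    key _ S hSI rfl
  intro n
  induction n with
  | zero =>
    intro S hS h0
    have : I = S := by
      have := (sdiff_eq_empty_iff_subset).1 (card_eq_zero.1 h0)
      exact subset_antisymm this hS
    rw [this]
    omega
  | succ n IH =>
    intro S hS hcard
    have hne : (I \ S).Nonempty := by rw [← card_pos, hcard]; omega
    obtain ⟨a, ha⟩ := hne
    have haI : a ∈ I := (mem_sdiff.1 ha).1
    have haS : a ∉ S := (mem_sdiff.1 ha).2
    have hsub : insert a S ⊆ I := insert_subset haI hS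
    have hc : (I \ insert a S).card = n := by
      have : I \ insert a S = (I \ S).erase a := by
        ext z; simp [mem_sdiff, mem_erase, mem_insert]; tauto
      rw [this, card_erase_of_mem ha, hcard]
      omega
    have h1 := IH (insert a S) hsub hc
    have h2 := rank_insert_le hM a (subtr_mono hI hsub)
    omega

lemma indep_subset (hM : IsMultimatroid cls r) {I J : Finset U}
    (hI : Subtransversal cls I) (hri : r I = I.card) (hJI : J ⊆ I) : r J = J.card := by
  have h1 := rank_le_rank_add hM hI hJI
  have h2 : (I \ J).card = I.card - J.card := card_sdiff_of_subset hJI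
  have h3 := hM.rank_le_card J (subtr_mono hI hJI)
  have h4 := card_le_card hJI
  omega

lemma rank_eq_of_forall_insert (hM : IsMultimatroid cls r) {A S : Finset U}
    (hA : Subtransversal cls A) (hSA : S ⊆ A)
    (h : ∀ a ∈ A, a ∉ S → r (insert a S) = r S) : r A = r S := by
  suffices key : ∀ n : ℕ, ∀ B, B ⊆ A → S ⊆ B → (B \ S).card = n → r B = r S by
    exact key _ A (le_refl _) hSA rfl
  intro n
  induction n with
  | zero =>
    intro B hBA hSB h0
    have : B = S := subset_antisymm ((sdiff_eq_empty_iff_subset).1 (card_eq_zero.1 h0)) hSB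
    rw [this]
  | succ n IH =>
    intro B hBA hSB hcard
    have hne : (B \ S).Nonempty := by rw [← card_pos, hcard]; omega
    obtain ⟨a, ha⟩ := hne
    have haB : a ∈ B := (mem_sdiff.1 ha).1
    have haS : a ∉ S := (mem_sdiff.1 ha).2
    set B' := B.erase a with hB'
    have hSB' : S ⊆ B' := fun z hz => mem_erase.2 ⟨fun h' => haS (h' ▸ hz), hSB hz⟩
    have hB'A : B' ⊆ A := (erase_subset _ _).trans hBA
    have hc : (B' \ S).card = n := by
      have : B' \ S = (B \ S).erase a := by
        ext z; simp [hB', mem_sdiff, mem_erase]; tauto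
      rw [this, card_erase_of_mem ha, hcard]
      omega
    have hIH : r B' = r S := IH B' hB'A hSB' hc
    have hins : r (insert a S) = r S := h a (hBA haB) haS
    have hBeq : B = B' ∪ insert a S := by
      ext z
      simp only [hB', mem_union, mem_erase, mem_insert]
      constructor
      · intro hz; by_cases hza : z = a
        · right; left; exact hza
        · left; exact ⟨hza, hz⟩
      · rintro (⟨_, hz⟩ | rfl | hz); · exact hz
        · exact haB
        · exact hSB hz
    have hInt : B' ∩ insert a S = S := by
      ext z
      simp only [hB', mem_inter, mem_erase, mem_insert]
      constructor
      · rintro ⟨⟨hza, hzB⟩, (rfl | hz)⟩; · exact absurd rfl hza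
        · exact hz
      · intro hz; exact ⟨⟨fun h' => haS (h' ▸ hz), hSB hz⟩, Or.inr hz⟩
    have hsm := hM.submod B' (insert a S) (by rw [← hBeq]; exact subtr_mono hA hBA)
    rw [← hBeq, hInt] at hsm
    have hmono := hM.mono S B (subtr_mono hA hBA) hSB
    omega

lemma exists_basis (hM : IsMultimatroid cls r) {A : Finset U}
    (hA : Subtransversal cls A) : ∃ I ⊆ A, r I = I.card ∧ r A = r I := by
  classical
  set P := A.powerset.filter (fun S => r S = S.card) with hP
  have hPne : P.Nonempty := by
    refine ⟨∅, ?_⟩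
    simp only [hP, mem_filter, mem_powerset]
    refine ⟨empty_subset _, ?_⟩
    have := hM.rank_le_card ∅ (subtr_mono hA (empty_subset _))
    simpa using Nat.le_zero.1 (by simpa using this)
  obtain ⟨I, hIP, hImax⟩ := Finset.exists_max_image P card hPne
  simp only [hP, mem_filter, mem_powerset] at hIP
  refine ⟨I, hIP.1, hIP.2, ?_⟩
  apply rank_eq_of_forall_insert hM hA hIP.1
  intro a haA haI
  have hsub : insert a I ⊆ A := insert_subset haA hIP.1
  have hst : Subtransversal cls (insert a I) := subtr_mono hA hsub
  have hub := rank_insert_le hM a hst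
  have hlb := hM.mono I (insert a I) hst (subset_insert _ _)
  rcases Nat.lt_or_ge (r (insert a I)) (r I + 1) with h | h
  · omega
  · exfalso
    have hcard : (insert a I).card = I.card + 1 := card_insert_of_notMem haI
    have : insert a I ∈ P := by
      simp only [hP, mem_filter, mem_powerset]
      exact ⟨hsub, by omega⟩
    have := hImax _ this
    omega

lemma exists_circuit_subset (hM : IsMultimatroid cls r) {A : Finset U}
    (hA : Subtransversal cls A) (hdep : r A < A.card) :
    ∃ C ⊆ A, Circuit cls r C := by
  classical
  set P := A.powerset.filter (fun S => r S < S.card) with hP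
  have hPne : P.Nonempty := ⟨A, by simp [hP, hdep]⟩
  obtain ⟨C, hCP, hCmin⟩ := Finset.exists_min_image P card hPne
  simp only [hP, mem_filter, mem_powerset] at hCP
  refine ⟨C, hCP.1, subtr_mono hA hCP.1, hCP.2, ?_⟩
  intro D hD hrD
  have hDP : D ∈ P := by
    simp only [hP, mem_filter, mem_powerset]
    exact ⟨hD.subset.trans hCP.1, hrD⟩
  have := hCmin _ hDP
  have := card_lt_card hD
  omega

lemma circuit_card (hM : IsMultimatroid cls r) {C : Finset U}
    (hC : Circuit cls r C) : r C + 1 = C.card := by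
  obtain ⟨hsub, hdep, hmin⟩ := hC
  have hne : C.Nonempty := by
    rw [← card_pos]; omega
  obtain ⟨e, he⟩ := hne
  have h1 : C \ {e} ⊂ C := by
    apply sdiff_ssubset (by simpa using he)
    exact singleton_nonempty e
  have h2 := hmin _ h1
  have h3 := hM.rank_le_card _ (subtr_mono hsub h1.subset)
  have h4 := hM.mono (C \ {e}) C hsub h1.subset
  have h5 : (C \ {e}).card = C.card - 1 := by
    rw [card_sdiff_of_subset (by simpa using he)]; simp
  omega

lemma circuit_sdiff_rank (hM : IsMultimatroid cls r) {C : Finset U}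
    (hC : Circuit cls r C) {e : U} (he : e ∈ C) : r (C \ {e}) = r C := by
  obtain ⟨hsub, hdep, hmin⟩ := hC
  have h1 : C \ {e} ⊂ C := sdiff_ssubset (by simpa using he) (singleton_nonempty e)
  have h2 := hmin _ h1
  have h3 := hM.rank_le_card _ (subtr_mono hsub h1.subset)
  have h4 := hM.mono (C \ {e}) C hsub h1.subset
  have h5 : (C \ {e}).card = C.card - 1 := by
    rw [card_sdiff_of_subset (by simpa using he)]; simp
  have := circuit_card hM ⟨hsub, hdep, hmin⟩
  omega

lemma rank_sdiff_eq (hM : IsMultimatroid cls r) {A C : Finset U}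
    (hA : Subtransversal cls A) (hC : Circuit cls r C) (hCA : C ⊆ A)
    {e : U} (he : e ∈ C) : r (A \ {e}) = r A := by
  have hU : (A \ {e}) ∪ C = A := by
    ext z; simp only [mem_union, mem_sdiff, mem_singleton]
    constructor
    · rintro (⟨h, _⟩ | h); · exact h
      · exact hCA h
    · intro h; by_cases hz : z = e
      · right; exact hz ▸ he
      · left; exact ⟨h, hz⟩
  have hI : (A \ {e}) ∩ C = C \ {e} := by
    ext z; simp only [mem_inter, mem_sdiff, mem_singleton]
    exact ⟨fun ⟨⟨_, h2⟩, h3⟩ => ⟨h3, h2⟩, fun ⟨h1, h2⟩ => ⟨⟨hCA h1, h2⟩, h1⟩⟩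
  have hsm := hM.submod (A \ {e}) C (by rw [hU]; exact hA)
  rw [hU, hI, circuit_sdiff_rank hM hC he] at hsm
  have hmono := hM.mono (A \ {e}) A hA (sdiff_subset)
  omega

lemma no_single_skew (hM : IsMultimatroid cls r) {C1 C2 : Finset U}
    (h1 : Circuit cls r C1) (h2 : Circuit cls r C2)
    {a b : U} (ha : a ∈ C1) (hb : b ∈ C2) (hab : cls a = cls b) (hne : a ≠ b)
    (hbC1 : b ∉ C1) (haC2 : a ∉ C2)
    (hs1 : Subtransversal cls ((C1 ∪ C2) \ {b}))
    (hs2 : Subtransversal cls ((C1 ∪ C2) \ {a}))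
    (hno : ∀ u ∈ (C1 ∪ C2) \ ({a, b} : Finset U), cls u ≠ cls a) : False := by
  set S := (C1 ∪ C2) \ ({a, b} : Finset U) with hS
  have hSsub : Subtransversal cls S := by
    apply subtr_mono hs1
    intro z hz
    simp only [hS, mem_sdiff, mem_insert, mem_singleton] at hz
    simp only [mem_sdiff, mem_singleton]
    exact ⟨hz.1, fun h => hz.2 (Or.inr h)⟩
  have hInsA : insert a S = (C1 ∪ C2) \ {b} := by
    ext z
    simp only [hS, mem_insert, mem_sdiff, mem_singleton]
    constructor
    · rintro (rfl | ⟨hz1, hz2⟩)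
      · exact ⟨mem_union_left _ ha, hne⟩
      · exact ⟨hz1, fun h => hz2 (Or.inr h)⟩
    · rintro ⟨hz1, hz2⟩
      by_cases hza : z = a
      · exact Or.inl hza
      · exact Or.inr ⟨hz1, by simp [hza, hz2]⟩
  have hInsB : insert b S = (C1 ∪ C2) \ {a} := by
    ext z
    simp only [hS, mem_insert, mem_sdiff, mem_singleton]
    constructor
    · rintro (rfl | ⟨hz1, hz2⟩)
      · exact ⟨mem_union_right _ hb, fun h => hne h.symm⟩
      · exact ⟨hz1, fun h => hz2 (Or.inl h)⟩
    · rintro ⟨hz1, hz2⟩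
      by_cases hzb : z = b
      · exact Or.inl hzb
      · exact Or.inr ⟨hz1, by simp [hzb, hz2]⟩
  have hax := hM.axiomR2 S a b hSsub hab hne hno
  have hrA : r (insert a S) = r S := by
    rw [hInsA]
    have hC1sub : C1 ⊆ (C1 ∪ C2) \ {b} := by
      intro z hz
      simp only [mem_sdiff, mem_singleton]
      exact ⟨mem_union_left _ hz, fun h => hbC1 (h ▸ hz)⟩
    have := rank_sdiff_eq hM hs1 h1 hC1sub ha
    have hEq : ((C1 ∪ C2) \ {b}) \ {a} = S := by
      ext z; simp only [hS, mem_sdiff, mem_singleton, mem_insert]; tauto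
    rw [hEq] at this
    omega
  have hrB : r (insert b S) = r S := by
    rw [hInsB]
    have hC2sub : C2 ⊆ (C1 ∪ C2) \ {a} := by
      intro z hz
      simp only [mem_sdiff, mem_singleton]
      exact ⟨mem_union_right _ hz, fun h => haC2 (h ▸ hz)⟩
    have := rank_sdiff_eq hM hs2 h2 hC2sub hb
    have hEq : ((C1 ∪ C2) \ {a}) \ {b} = S := by
      ext z; simp only [hS, mem_sdiff, mem_singleton, mem_insert]; tauto
    rw [hEq] at this
    omega
  omega

lemma strong_elim (hM : IsMultimatroid cls r) {C1 C2 : Finset U}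
    (h1 : Circuit cls r C1) (h2 : Circuit cls r C2)
    (hsub : Subtransversal cls (C1 ∪ C2)) (hne : C1 ≠ C2)
    {e f : U} (he1 : e ∈ C1) (he2 : e ∈ C2) (hf1 : f ∈ C1) (hf2 : f ∉ C2) :
    ∃ C3, Circuit cls r C3 ∧ C3 ⊆ (C1 ∪ C2) \ {e} ∧ f ∈ C3 := by
  classical
  have hC1u : C1 ⊆ C1 ∪ C2 := subset_union_left
  have hC2u : C2 ⊆ C1 ∪ C2 := subset_union_right
  -- rank of the union
  have hint : C1 ∩ C2 ⊂ C1 := by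
    refine ⟨inter_subset_left, ?_⟩
    intro h
    have hC12 : C1 ⊆ C2 := fun z hz => (mem_inter.1 (h hz)).2
    have : C1 ⊂ C2 := ssubset_of_subset_of_ne hC12 hne
    exact h2.2.2 C1 this h1.2.1
  have hintr : r (C1 ∩ C2) = (C1 ∩ C2).card := by
    have := h1.2.2 _ hint
    have := hM.rank_le_card _ (subtr_mono h1.1 hint.subset)
    omega
  have hcard1 := circuit_card hM h1
  have hcard2 := circuit_card hM h2
  have hsm := hM.submod C1 C2 hsub
  have hcardU : (C1 ∪ C2).card + (C1 ∩ C2).card = C1.card + C2.card :=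
    card_union_add_card_inter _ _
  have hrU : r (C1 ∪ C2) + 2 ≤ (C1 ∪ C2).card := by omega
  -- removing e keeps rank
  have hre : r ((C1 ∪ C2) \ {e}) = r (C1 ∪ C2) :=
    rank_sdiff_eq hM hsub h1 hC1u he1
  -- removing f then e keeps rank
  have hrf : r ((C1 ∪ C2) \ {f}) = r (C1 ∪ C2) :=
    rank_sdiff_eq hM hsub h1 hC1u hf1
  have hsubf : Subtransversal cls ((C1 ∪ C2) \ {f}) := subtr_mono hsub sdiff_subset
  have hC2subf : C2 ⊆ (C1 ∪ C2) \ {f} := by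
    intro z hz
    simp only [mem_sdiff, mem_singleton]
    exact ⟨mem_union_right _ hz, fun h => hf2 (h ▸ hz)⟩
  have hrfe : r (((C1 ∪ C2) \ {f}) \ {e}) = r ((C1 ∪ C2) \ {f}) :=
    rank_sdiff_eq hM hsubf h2 hC2subf he2
  have hswap : ((C1 ∪ C2) \ {f}) \ {e} = ((C1 ∪ C2) \ {e}) \ {f} := by
    ext z; simp only [mem_sdiff, mem_singleton]; tauto
  set X := (C1 ∪ C2) \ {e} with hX
  have hXsub : Subtransversal cls X := subtr_mono hsub sdiff_subset
  have hfX : f ∈ X := by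
    simp only [hX, mem_sdiff, mem_singleton]
    exact ⟨mem_union_left _ hf1, fun h => hf2 (h ▸ he2)⟩
  have hrXf : r (X \ {f}) = r X := by
    rw [hX, ← hswap, hrfe, hrf, hre]
  -- find a basis of X \ {f}
  obtain ⟨I, hIsub, hIind, hIr⟩ := exists_basis hM (subtr_mono hXsub (sdiff_subset : X \ {f} ⊆ X))
  have hfI : f ∉ I := fun h => by
    have := hIsub h
    simp at this
  set D := insert f I with hD
  have hDX : D ⊆ X := by
    intro z hz
    rcases mem_insert.1 hz with rfl | hz
    · exact hfX
    · exact (mem_sdiff.1 (hIsub hz)).1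
  have hDsub : Subtransversal cls D := subtr_mono hXsub hDX
  have hXcard : r X < X.card := by
    have : X.card + 1 = (C1 ∪ C2).card := by
      rw [hX, card_sdiff_of_subset (by simpa using hC1u he1)]
      have : 0 < (C1 ∪ C2).card := card_pos.2 ⟨e, hC1u he1⟩
      simp
      omega
    omega
  have hDdep : r D < D.card := by
    have h1' : r D ≤ r X := hM.mono D X hXsub hDX
    have h2' : D.card = I.card + 1 := card_insert_of_notMem hfI
    omega
  obtain ⟨C3, hC3D, hC3⟩ := exists_circuit_subset hM hDsub hDdep
  refine ⟨C3, hC3, hC3D.trans hDX, ?_⟩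
  by_contra hfC3
  have hC3I : C3 ⊆ I := by
    intro z hz
    rcases mem_insert.1 (hC3D hz) with rfl | h
    · exact absurd hz hfC3
    · exact h
  have hind := indep_subset hM (subtr_mono hDsub (subset_insert _ _)) hIind hC3I
  have hdep3 := hC3.2.1
  omega

end Aux

/-- if the skew class `i` is active with respect to the transversal
`T`, then there is a witnessing circuit meeting no other active skew class. -/
theorem stmt_17 [DecidableEq U] [Fintype U] [DecidableEq ι] [Fintype ι] [LinearOrder ι]
    (cls : U → ι) (r : Finset U → ℕ) (hM : IsMultimatroid cls r)
    (T : Finset U) (hT : Transversal cls T) (i : ι)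
    (hact : Active cls r T i) :
    ∃ C, Circuit cls r C ∧ C \ skewClass cls i ⊆ T ∧
      (∃ m ∈ C, cls m = i ∧ ∀ x ∈ C, i ≤ cls x) ∧
      ∀ x ∈ C, cls x ≠ i → ¬ Active cls r T (cls x) := by
  classical
  obtain ⟨C0, hC0, hC0T, hW0⟩ := hact
  suffices key : ∀ n : ℕ, ∀ C : Finset U, Circuit cls r C → C \ skewClass cls i ⊆ T →
      (∃ m ∈ C, cls m = i ∧ ∀ x ∈ C, i ≤ cls x) →
      (Finset.univ.filter (fun j : ι => ∃ b : ι, b ≠ i ∧ Active cls r T b ∧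
        (∃ z ∈ C, cls z = b) ∧ b ≤ j)).card ≤ n →
      ∃ C', Circuit cls r C' ∧ C' \ skewClass cls i ⊆ T ∧
        (∃ m ∈ C', cls m = i ∧ ∀ x ∈ C', i ≤ cls x) ∧
        ∀ x ∈ C', cls x ≠ i → ¬ Active cls r T (cls x) by
    exact key _ C0 hC0 hC0T hW0 le_rfl
  intro n
  induction n using Nat.strong_induction_on with
  | _ n IH =>
  intro C hC hCT hW hcard
  obtain ⟨m, hmC, hmcls, hlow⟩ := hW
  by_cases hdone : ∀ x ∈ C, cls x ≠ i → ¬ Active cls r T (cls x)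
  · exact ⟨C, hC, hCT, ⟨m, hmC, hmcls, hlow⟩, hdone⟩
  push_neg at hdone
  obtain ⟨x0, hx0C, hx0i, hx0act⟩ := hdone
  set Bad : Finset ι :=
    Finset.univ.filter (fun j => j ≠ i ∧ Active cls r T j ∧ ∃ z ∈ C, cls z = j) with hBadDef
  have hBadne : Bad.Nonempty := by
    refine ⟨cls x0, ?_⟩
    simp only [hBadDef, mem_filter, mem_univ, true_and]
    exact ⟨hx0i, hx0act, x0, hx0C, rfl⟩
  set ν := Bad.min' hBadne with hνdef
  have hνmem : ν ∈ Bad := by rw [hνdef]; exact Bad.min'_mem hBadne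
  rw [hBadDef] at hνmem
  simp only [mem_filter, mem_univ, true_and] at hνmem
  obtain ⟨hνi, hνact, x, hxC, hxν⟩ := hνmem
  have hνact' := hνact
  have hiν : i < ν := lt_of_le_of_ne (by rw [← hxν]; exact hlow x hxC) (Ne.symm hνi)
  obtain ⟨C', hC', hC'T, y, hyC', hyν, hlow'⟩ := hνact
  -- basic facts about C and C'
  have hCm : ∀ z ∈ C, cls z = i → z = m := fun z hz hzi =>
    hC.1 (by exact_mod_cast hz) (by exact_mod_cast hmC) (hzi.trans hmcls.symm)
  have hCx : ∀ z ∈ C, cls z = ν → z = x := fun z hz hzν =>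
    hC.1 (by exact_mod_cast hz) (by exact_mod_cast hxC) (hzν.trans hxν.symm)
  have hC'y : ∀ z ∈ C', cls z = ν → z = y := fun z hz hzν =>
    hC'.1 (by exact_mod_cast hz) (by exact_mod_cast hyC') (hzν.trans hyν.symm)
  have hCTmem : ∀ z ∈ C, cls z ≠ i → z ∈ T := fun z hz hzi =>
    hCT (by simp only [mem_sdiff, mem_skewClass]; exact ⟨hz, hzi⟩)
  have hC'Tmem : ∀ z ∈ C', cls z ≠ ν → z ∈ T := fun z hz hzν =>
    hC'T (by simp only [mem_sdiff, mem_skewClass]; exact ⟨hz, hzν⟩)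
  have hC'i : ∀ z ∈ C', cls z ≠ i := fun z hz =>
    fun h => absurd (h ▸ hlow' z hz) (not_le.2 hiν)
  have hxT : x ∈ T := hCTmem x hxC (hxν ▸ hνi)
  have hclsm : ∀ z ∈ C ∪ C', cls z = i → z = m := by
    intro z hz hzi
    rcases mem_union.1 hz with h | h
    · exact hCm z h hzi
    · exact absurd hzi (hC'i z h)
  by_cases hxy : y = x
  · -- y = x : use strong circuit elimination
    rw [hxy] at hyC' hyν hC'y
    have hC'subT : C' ⊆ T := by
      intro z hz
      by_cases h : cls z = ν
      · rw [hC'y z hz h]; exact hxT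
      · exact hC'Tmem z hz h
    have hsubU : Subtransversal cls (C ∪ C') := by
      apply subtr_of_forall
      intro u hu v hv huv
      by_cases hui : cls u = i
      · rw [hclsm u hu hui, hclsm v hv (huv ▸ hui)]
      · have huT : u ∈ T := by
          rcases mem_union.1 hu with h | h
          · exact hCTmem u h hui
          · exact hC'subT h
        have hvT : v ∈ T := by
          rcases mem_union.1 hv with h | h
          · exact hCTmem v h (huv ▸ hui)
          · exact hC'subT h
        exact hT.1 (by exact_mod_cast huT) (by exact_mod_cast hvT) huv
    have hmC' : m ∉ C' := fun h => hC'i m h hmcls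
    have hne : C ≠ C' := fun h => hmC' (h ▸ hmC)
    obtain ⟨C'', hC'', hC''sub, hmC''⟩ :=
      strong_elim hM hC hC' hsubU hne hxC hyC' hmC hmC'
    have hC''mem : ∀ z ∈ C'', z ∈ C ∪ C' ∧ z ≠ x := by
      intro z hz
      have := hC''sub hz
      simp only [mem_sdiff, mem_singleton] at this
      exact this
    have hC''ν : ∀ z ∈ C'', cls z ≠ ν := by
      intro z hz hzν
      obtain ⟨hzU, hzy⟩ := hC''mem z hz
      rcases mem_union.1 hzU with h | h
      · exact hzy (hCx z h hzν)
      · exact hzy (hC'y z h hzν)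
    have hC''T : C'' \ skewClass cls i ⊆ T := by
      intro z hz
      simp only [mem_sdiff, mem_skewClass] at hz
      obtain ⟨hzC'', hzi⟩ := hz
      obtain ⟨hzU, _⟩ := hC''mem z hzC''
      rcases mem_union.1 hzU with h | h
      · exact hCTmem z h hzi
      · exact hC'subT h
    have hW'' : ∃ m' ∈ C'', cls m' = i ∧ ∀ z ∈ C'', i ≤ cls z := by
      refine ⟨m, hmC'', hmcls, ?_⟩
      intro z hz
      obtain ⟨hzU, _⟩ := hC''mem z hz
      rcases mem_union.1 hzU with h | h
      · exact hlow z h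
      · exact le_of_lt (lt_of_lt_of_le hiν (hlow' z h))
    -- measure decreases
    set Uof : Finset U → Finset ι := fun D =>
      Finset.univ.filter (fun j : ι => ∃ b : ι, b ≠ i ∧ Active cls r T b ∧
        (∃ z ∈ D, cls z = b) ∧ b ≤ j) with hUof
    have hνU : ν ∈ Uof C := by
      simp only [hUof, mem_filter, mem_univ, true_and]
      exact ⟨ν, hνi, hνact', ⟨x, hxC, hxν⟩, le_rfl⟩
    have hνnotU : ν ∉ Uof C'' := by
      simp only [hUof, mem_filter, mem_univ, true_and, not_exists]
      rintro b ⟨hbi, hbact, ⟨z, hzC'', hzb⟩, hbν⟩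
      obtain ⟨hzU, hzy⟩ := hC''mem z hzC''
      rcases mem_union.1 hzU with h | h
      · have hbBad : b ∈ Bad := by
          simp only [hBadDef, mem_filter, mem_univ, true_and]
          exact ⟨hbi, hbact, z, h, hzb⟩
        have : ν ≤ b := by rw [hνdef]; exact Finset.min'_le _ _ hbBad
        have hzν : cls z = ν := hzb.trans (le_antisymm hbν this)
        exact hC''ν z hzC'' hzν
      · have : ν ≤ b := hzb ▸ hlow' z h
        have hzν : cls z = ν := le_antisymm (hzb ▸ hbν) (hlow' z h)
        exact hC''ν z hzC'' hzν
    have hUsub : Uof C'' ⊆ Uof C := by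
      intro j hj
      simp only [hUof, mem_filter, mem_univ, true_and] at hj ⊢
      obtain ⟨b, hbi, hbact, ⟨z, hzC'', hzb⟩, hbj⟩ := hj
      obtain ⟨hzU, _⟩ := hC''mem z hzC''
      rcases mem_union.1 hzU with h | h
      · exact ⟨b, hbi, hbact, ⟨z, h, hzb⟩, hbj⟩
      · refine ⟨ν, hνi, hνact', ⟨x, hxC, hxν⟩, ?_⟩
        exact le_trans (hzb ▸ hlow' z h) hbj
    have hlt : (Uof C'').card < (Uof C).card :=
      card_lt_card ⟨hUsub, fun h => hνnotU (h hνU)⟩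
    exact IH _ (lt_of_lt_of_le hlt hcard) C'' hC'' hC''T hW'' le_rfl
  · -- y ≠ x : impossible (would give a union of two circuits with exactly one skew pair)
    exfalso
    have hyC : y ∉ C := fun h => hxy (hCx y h hyν)
    have hxC' : x ∉ C' := fun h => hxy (hC'y x h hxν).symm
    have hclsν : ∀ z ∈ C ∪ C', cls z = ν → z = x ∨ z = y := by
      intro z hz hzν
      rcases mem_union.1 hz with h | h
      · exact Or.inl (hCx z h hzν)
      · exact Or.inr (hC'y z h hzν)
    have hTmem : ∀ z ∈ C ∪ C', cls z ≠ i → cls z ≠ ν → z ∈ T := by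
      intro z hz hzi hzν
      rcases mem_union.1 hz with h | h
      · exact hCTmem z h hzi
      · exact hC'Tmem z h hzν
    have hs1 : Subtransversal cls ((C ∪ C') \ {y}) := by
      apply subtr_of_forall
      intro u hu v hv huv
      simp only [mem_sdiff, mem_singleton] at hu hv
      by_cases hui : cls u = i
      · rw [hclsm u hu.1 hui, hclsm v hv.1 (huv ▸ hui)]
      · by_cases huν : cls u = ν
        · rcases hclsν u hu.1 huν with rfl | rfl
          · rcases hclsν v hv.1 (huv ▸ huν) with rfl | rfl
            · rfl
            · exact absurd rfl hv.2
          · exact absurd rfl hu.2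
        · exact hT.1 (by exact_mod_cast hTmem u hu.1 hui huν)
            (by exact_mod_cast hTmem v hv.1 (huv ▸ hui) (huv ▸ huν)) huv
    have hs2 : Subtransversal cls ((C ∪ C') \ {x}) := by
      apply subtr_of_forall
      intro u hu v hv huv
      simp only [mem_sdiff, mem_singleton] at hu hv
      by_cases hui : cls u = i
      · rw [hclsm u hu.1 hui, hclsm v hv.1 (huv ▸ hui)]
      · by_cases huν : cls u = ν
        · rcases hclsν u hu.1 huν with rfl | rfl
          · exact absurd rfl hu.2
          · rcases hclsν v hv.1 (huv ▸ huν) with rfl | rfl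
            · exact absurd rfl hv.2
            · rfl
        · exact hT.1 (by exact_mod_cast hTmem u hu.1 hui huν)
            (by exact_mod_cast hTmem v hv.1 (huv ▸ hui) (huv ▸ huν)) huv
    have hno : ∀ u ∈ (C ∪ C') \ ({x, y} : Finset U), cls u ≠ cls x := by
      intro u hu
      simp only [mem_sdiff, mem_insert, mem_singleton] at hu
      rw [hxν]
      intro huν
      rcases hclsν u hu.1 huν with rfl | rfl
      · exact hu.2 (Or.inl rfl)
      · exact hu.2 (Or.inr rfl)
    exact no_single_skew hM hC hC' hxC hyC' (hxν.trans hyν.symm)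
      (fun h => hxy h.symm) hyC hxC' hs1 hs2 hno
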